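/- Let Γ be a group acting on a group P, let U be a Γ-stable normal subgroup of P with quotient L = P/U, and suppose the projection P → L admits a Γ-equivariant group-theoretic section. If the pointed set H¹(Γ, U_c) is trivial for every twist U_c of U by a cocycle valued in P, then the induced map of pointed sets H¹(Γ, P) → H¹(Γ, L) is a bijection. -/

import Mathlib

/-!
A class in `H¹(Γ, L)` lifts along the section `s`. For injectivity, first conjugate `c'` by a lift
of the element relating the images of `c` and `c'` in `L`, so that `c` and `c'` have the same image.
Then `σ ↦ c' σ * (c σ)⁻¹` is a cocycle of `Γ` in the twist `U_c` of `U = ker π`, and a coboundary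
`v` trivialising it in `U_c` exhibits `c'` as cohomologous to `c`.
-/

variable (Γ : Type*) [Group Γ]

/-- A (nonabelian) 1-cocycle of `Γ` valued in the `Γ`-group `P`. -/
def IsCocycle {P : Type*} [Group P] [MulDistribMulAction Γ P] (c : Γ → P) : Prop :=
  ∀ σ τ : Γ, c (σ * τ) = c σ * σ • c τ

/-- Two 1-cocycles are cohomologous if they differ by a coboundary. -/
def Cohomologous {P : Type*} [Group P] [MulDistribMulAction Γ P] (c c' : Γ → P) : Prop :=
  ∃ g : P, ∀ σ : Γ, c' σ = g⁻¹ * c σ * σ • g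

section Cocycles

variable {Γ} {P L : Type*} [Group P] [Group L] [MulDistribMulAction Γ P]

/-- Cocycle condition in the twist `P_c`, where `σ` acts by `u ↦ c σ * (σ • u) * (c σ)⁻¹`. -/
def IsTwistedCocycle (c u : Γ → P) : Prop :=
  ∀ σ τ : Γ, u (σ * τ) = u σ * (c σ * (σ • u τ) * (c σ)⁻¹)

theorem Cohomologous.refl (c : Γ → P) : Cohomologous Γ c c :=
  ⟨1, fun σ => by simp⟩

theorem Cohomologous.trans {c c' c'' : Γ → P} :
    Cohomologous Γ c c' → Cohomologous Γ c' c'' → Cohomologous Γ c c''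
  | ⟨g, hg⟩, ⟨h, hh⟩ => ⟨g * h, fun σ => by rw [hh, hg, smul_mul']; group⟩

theorem IsCocycle.conj {c : Γ → P} (hc : IsCocycle Γ c) (g : P) :
    IsCocycle Γ (fun σ => g * c σ * (σ • g)⁻¹) := by
  intro σ τ
  simp only [hc σ τ, mul_smul, smul_mul', smul_inv']
  group

theorem cohomologous_conj (c : Γ → P) (g : P) :
    Cohomologous Γ (fun σ => g * c σ * (σ • g)⁻¹) c :=
  ⟨g, fun σ => by group⟩

theorem IsCocycle.isTwistedCocycle_mul_inv {c c' : Γ → P} (hc : IsCocycle Γ c)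
    (hc' : IsCocycle Γ c') : IsTwistedCocycle c (fun σ => c' σ * (c σ)⁻¹) := by
  intro σ τ
  simp only [hc σ τ, hc' σ τ, mul_inv_rev, smul_mul', smul_inv']
  group

theorem cohomologous_of_map_eq (π : P →* L) {c c' : Γ → P} (hc : IsCocycle Γ c)
    (hc' : IsCocycle Γ c') (hcc' : ∀ σ, π (c' σ) = π (c σ))
    (hU : ∀ u : Γ → P, (∀ σ, u σ ∈ π.ker) → IsTwistedCocycle c u →
      ∃ v ∈ π.ker, ∀ σ, u σ = v⁻¹ * (c σ * (σ • v) * (c σ)⁻¹)) :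
    Cohomologous Γ c c' := by
  have hker : ∀ σ, c' σ * (c σ)⁻¹ ∈ π.ker := fun σ => by
    rw [MonoidHom.mem_ker, map_mul, map_inv, hcc', mul_inv_cancel]
  obtain ⟨v, -, hv⟩ := hU _ hker (hc.isTwistedCocycle_mul_inv hc')
  exact ⟨v, fun σ => by rw [mul_inv_eq_iff_eq_mul.mp (hv σ)]; group⟩

variable [MulDistribMulAction Γ L]

theorem IsCocycle.map {c : Γ → P} (hc : IsCocycle Γ c) (f : P →* L)
    (hf : ∀ (σ : Γ) (p : P), f (σ • p) = σ • f p) : IsCocycle Γ (fun σ => f (c σ)) := by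
  intro σ τ
  simp only [hc σ τ, map_mul, hf]

theorem Cohomologous.exists_cohomologous_map_eq (π : P →* L) (hπsurj : Function.Surjective π)
    (hπequiv : ∀ (σ : Γ) (p : P), π (σ • p) = σ • π p) {c c' : Γ → P} (hc' : IsCocycle Γ c')
    (h : Cohomologous Γ (fun σ => π (c σ)) (fun σ => π (c' σ))) :
    ∃ c'' : Γ → P, IsCocycle Γ c'' ∧ Cohomologous Γ c'' c' ∧ ∀ σ, π (c'' σ) = π (c σ) := by
  obtain ⟨l, hl⟩ := h
  obtain ⟨g, rfl⟩ := hπsurj l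
  refine ⟨_, hc'.conj g, cohomologous_conj c' g, fun σ => ?_⟩
  simp only [map_mul, map_inv, hπequiv, hl σ]
  group

end Cocycles

theorem stmt_0 {P L : Type*} [Group P] [Group L]
    [MulDistribMulAction Γ P] [MulDistribMulAction Γ L]
    (π : P →* L)
    (hπequiv : ∀ (σ : Γ) (p : P), π (σ • p) = σ • π p)
    (s : L →* P) (hsec : ∀ l : L, π (s l) = l)
    (hsequiv : ∀ (σ : Γ) (l : L), s (σ • l) = σ • s l)
    (hU : ∀ c : Γ → P, IsCocycle Γ c →
      ∀ u : Γ → P, (∀ σ, u σ ∈ π.ker) →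
      (∀ σ τ : Γ, u (σ * τ) = u σ * (c σ * (σ • u τ) * (c σ)⁻¹)) →
      ∃ v ∈ π.ker, ∀ σ, u σ = v⁻¹ * (c σ * (σ • v) * (c σ)⁻¹)) :
    (∀ d : Γ → L, IsCocycle Γ d →
      ∃ c : Γ → P, IsCocycle Γ c ∧ Cohomologous Γ (fun σ => π (c σ)) d) ∧
    (∀ c c' : Γ → P, IsCocycle Γ c → IsCocycle Γ c' →
      Cohomologous Γ (fun σ => π (c σ)) (fun σ => π (c' σ)) →
      Cohomologous Γ c c') := by
  refine ⟨fun d hd => ⟨_, hd.map s hsequiv, by simpa only [hsec] using Cohomologous.refl d⟩, ?_⟩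
  intro c c' hc hc' hcc'
  obtain ⟨c'', hc'', hc''c', hπc''⟩ :=
    hcc'.exists_cohomologous_map_eq π (fun l => ⟨s l, hsec l⟩) hπequiv hc'
  exact (cohomologous_of_map_eq π hc hc'' hπc'' (hU c hc)).trans hc''c'
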